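/- For d > 1, H(d) ≥ C(d) · arccosh((2cosh(ρ) − d − 1)/(d − 1)) for every ρ > arccosh(d), where C(d) = 1/(√(cosh(ρ)/d + 1)·√((cosh(ρ)+1)/d)); in particular, for each fixed ρ, the right-hand side tends to +∞ as d → 1⁺. -/

import Mathlib

/-!
On `(arccosh d, ρ]` the integrand of `H d` factors as `w (cosh u) * G' u`, where
`w s = 1 / (√(s / d + 1) * √((s + 1) / d))` is decreasing in `s` and
`G' u = √(cosh u + 1) / √(cosh u - d)` is the derivative of
`G u = arccosh ((2 cosh u - d - 1) / (d - 1))`, which vanishes at `u = arccosh d`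
(this is the substitution `v = cosh u / d - 1`). Bounding `w (cosh u)` below by `w (cosh ρ)` and
integrating gives `w (cosh ρ) * G ρ ≤ H d`. As `d → 1⁺` the factor `w (cosh ρ)` tends to
`1 / (cosh ρ + 1)`, while the argument of `arccosh` blows up like `2 (cosh ρ - 1) / (d - 1)`.
-/

open MeasureTheory Set Real Filter Topology

noncomputable def arccosh (x : ℝ) : ℝ := Real.log (x + Real.sqrt (x ^ 2 - 1))

noncomputable def H (d : ℝ) : ℝ :=
  ∫ u in Set.Ioi (arccosh d), d / Real.sqrt (Real.cosh u ^ 2 - d ^ 2)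

lemma arccosh_eq_arcosh : arccosh = arcosh := rfl

lemma hasDerivAt_arccos_div_sinh {b u : ℝ} (hb : 0 < b) (hu : b < sinh u) :
    HasDerivAt (fun u => arccos (b / sinh u))
      (b * cosh u / (sinh u * √(sinh u ^ 2 - b ^ 2))) u := by
  have hs : 0 < sinh u := hb.trans hu
  have hq : b / sinh u < 1 := (div_lt_one hs).2 hu
  have hq' : -1 < b / sinh u := neg_one_lt_zero.trans (div_pos hb hs)
  have hd := (hasDerivAt_arccos hq'.ne' hq.ne).comp u
    ((hasDerivAt_const u b).div (Real.hasDerivAt_sinh u) hs.ne')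
  refine hd.congr_deriv ?_
  have e : √(1 - (b / sinh u) ^ 2) = √(sinh u ^ 2 - b ^ 2) / sinh u := by
    rw [← sqrt_sq hs.le, ← sqrt_div' _ (sq_nonneg _), sqrt_sq hs.le]
    congr 1; field_simp
  rw [e]; field_simp; ring

/- Since `sinh u < cosh u`, the integrand is at most `b⁻¹` times the derivative of the
bounded increasing function `arccos (b / sinh u)`, where `b = sinh a`. -/
lemma integrableOn_one_div_sqrt_sinh_sq_sub {a : ℝ} (ha : 0 < a) :
    IntegrableOn (fun u => 1 / √(sinh u ^ 2 - sinh a ^ 2)) (Ioi a) := by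
  set b := sinh a
  have hb : 0 < b := sinh_pos_iff.2 ha
  have hbu : ∀ u ∈ Ioi a, b < sinh u := fun u hu => sinh_lt_sinh.2 hu
  have hint :
      IntegrableOn (fun u => b * cosh u / (sinh u * √(sinh u ^ 2 - b ^ 2))) (Ioi a) := by
    refine integrableOn_Ioi_deriv_of_nonneg (g := fun u => arccos (b / sinh u)) ?_
      (fun u hu => hasDerivAt_arccos_div_sinh hb (hbu u hu)) (fun u hu => ?_)
      ((continuous_arccos.tendsto 0).comp
        (tendsto_const_nhds.div_atTop sinhOrderIso.tendsto_atTop))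
    · exact (continuous_arccos.continuousAt.comp
        (continuousAt_const.div continuous_sinh.continuousAt hb.ne')).continuousWithinAt
    · have : 0 < sinh u := hb.trans (hbu u hu)
      positivity
  refine (hint.const_mul b⁻¹).mono' (Measurable.aestronglyMeasurable (by fun_prop))
    ((ae_restrict_iff' measurableSet_Ioi).2 ?_)
  filter_upwards with u hu
  have hs : 0 < sinh u := hb.trans (hbu u hu)
  have hpos : 0 < √(sinh u ^ 2 - b ^ 2) := sqrt_pos.2 (by nlinarith [hbu u hu])
  rw [norm_of_nonneg (by positivity), inv_mul_eq_div, mul_div_assoc,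
    mul_div_cancel_left₀ _ hb.ne', div_le_div_iff₀ hpos (by positivity)]
  nlinarith [sinh_lt_cosh (x := u)]

lemma integrableOn_H_integrand {d : ℝ} (hd : 1 < d) :
    IntegrableOn (fun u => d / √(cosh u ^ 2 - d ^ 2)) (Ioi (arcosh d)) := by
  have h := (integrableOn_one_div_sqrt_sinh_sq_sub (arcosh_pos hd)).const_mul d
  have hsq : ∀ u, sinh u ^ 2 - sinh (arcosh d) ^ 2 = cosh u ^ 2 - d ^ 2 := fun u => by
    rw [sinh_sq, sinh_sq, cosh_arcosh hd.le]; ring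
  simp only [hsq, mul_one_div] at h
  exact h

lemma hasDerivAt_arcosh_two_cosh_sub_div {d u : ℝ} (hd : 1 < d) (hu : 0 ≤ u)
    (hdu : d < cosh u) :
    HasDerivAt (fun u => arcosh ((2 * cosh u - d - 1) / (d - 1)))
      (√(cosh u + 1) / √(cosh u - d)) u := by
  set s := cosh u
  have hd1 : 0 < d - 1 := by linarith
  have hg : 1 < (2 * s - d - 1) / (d - 1) := by rw [one_lt_div hd1]; linarith
  have hG := (hasDerivAt_arcosh hg).comp u
    ((((Real.hasDerivAt_cosh u).const_mul 2).sub_const d |>.sub_const 1).div_const (d - 1))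
  refine hG.congr_deriv ?_
  -- both sides are nonnegative because `0 ≤ u` gives `0 ≤ sinh u`, so compare their squares
  rw [← sq_eq_sq₀ (by positivity) (by positivity), mul_pow, inv_pow, sq_sqrt (by nlinarith),
    div_pow, div_pow, div_pow, sq_sqrt (by linarith), sq_sqrt (by linarith), mul_pow, sinh_sq]
  have hs1 : s - 1 ≠ 0 := by linarith
  rw [div_sub_one (by positivity),
    show (2 * s - d - 1) ^ 2 - (d - 1) ^ 2 = 4 * ((s - d) * (s - 1)) by ring]
  field_simp
  ring

lemma div_sqrt_sq_sub_sq_eq {d s : ℝ} (hd : 0 < d) (hs : d < s) :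
    d / √(s ^ 2 - d ^ 2) =
      1 / (√(s / d + 1) * √((s + 1) / d)) * (√(s + 1) / √(s - d)) := by
  have hs0 : 0 < s := hd.trans hs
  have h₁ : 0 < s ^ 2 - d ^ 2 := by nlinarith
  have h₂ : 0 < s / d + 1 := by positivity
  have h₃ : 0 < (s + 1) / d := by positivity
  have h₄ : 0 < s - d := by linarith
  rw [← sq_eq_sq₀ (div_nonneg hd.le (sqrt_nonneg _)) (by positivity), div_pow, mul_pow, div_pow,
    div_pow, mul_pow, sq_sqrt h₁.le, sq_sqrt h₂.le, sq_sqrt h₃.le, sq_sqrt h₄.le,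
    sq_sqrt (by linarith)]
  field_simp
  ring

lemma one_div_sqrt_mul_sqrt_le_of_le {d s c : ℝ} (hd : 0 < d) (hs : 0 ≤ s) (hsc : s ≤ c) :
    1 / (√(c / d + 1) * √((c + 1) / d)) ≤ 1 / (√(s / d + 1) * √((s + 1) / d)) := by
  have : 0 < √(s / d + 1) * √((s + 1) / d) := by
    apply mul_pos <;> apply sqrt_pos.2 <;> positivity
  gcongr

theorem mul_arcosh_le_H {d ρ : ℝ} (hd : 1 < d) (hρ : arcosh d < ρ) :
    1 / (√(cosh ρ / d + 1) * √((cosh ρ + 1) / d)) * arcosh ((2 * cosh ρ - d - 1) / (d - 1))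
      ≤ H d := by
  set a := arcosh d
  set K := 1 / (√(cosh ρ / d + 1) * √((cosh ρ + 1) / d))
  set G := fun u => K * arcosh ((2 * cosh u - d - 1) / (d - 1))
  have ha : 0 < a := arcosh_pos hd
  have hcosh_le : ∀ {u v}, 0 ≤ u → u ≤ v → cosh u ≤ cosh v := fun hu huv =>
    cosh_strictMonoOn.monotoneOn hu (hu.trans huv) huv
  have hd_le : ∀ u, a ≤ u → d ≤ cosh u := fun u hu =>
    cosh_arcosh hd.le ▸ hcosh_le ha.le hu
  have hd_lt : ∀ u, a < u → d < cosh u := fun u hu =>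
    cosh_arcosh hd.le ▸ cosh_strictMonoOn ha.le (ha.trans hu).le hu
  have hf := integrableOn_H_integrand hd
  have hGa : G a = 0 := by
    simp only [G, a, cosh_arcosh hd.le]
    rw [show 2 * d - d - 1 = d - 1 by ring, div_self (by linarith), arcosh_zero, mul_zero]
  have hcont : ContinuousOn G (Icc a ρ) :=
    continuousOn_const.mul <| continuousOn_arcosh.comp (by fun_prop) fun u hu => by
      rw [mem_Ici, one_le_div (by linarith)]; linarith [hd_le u hu.1]
  have hderiv : ∀ u ∈ Ioo a ρ,
      HasDerivWithinAt G (K * (√(cosh u + 1) / √(cosh u - d))) (Ioi u) u :=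
    fun u hu => ((hasDerivAt_arcosh_two_cosh_sub_div hd (ha.trans hu.1).le
      (hd_lt u hu.1)).const_mul K).hasDerivWithinAt
  have hbound : ∀ u ∈ Ioo a ρ,
      K * (√(cosh u + 1) / √(cosh u - d)) ≤ d / √(cosh u ^ 2 - d ^ 2) := fun u hu => by
    rw [div_sqrt_sq_sub_sq_eq (by linarith) (hd_lt u hu.1)]
    exact mul_le_mul_of_nonneg_right (one_div_sqrt_mul_sqrt_le_of_le (by linarith)
      (cosh_pos u).le (hcosh_le (ha.trans hu.1).le hu.2.le)) (by positivity)
  calc K * arcosh ((2 * cosh ρ - d - 1) / (d - 1)) = G ρ - G a := by rw [hGa, sub_zero]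
    _ ≤ ∫ u in a..ρ, d / √(cosh u ^ 2 - d ^ 2) :=
      intervalIntegral.sub_le_integral_of_hasDeriv_right_of_le hρ.le hcont hderiv
        ((hf.mono_set Ioc_subset_Ioi_self).congr_set_ae Ioc_ae_eq_Icc.symm) hbound
    _ = ∫ u in Ioc a ρ, d / √(cosh u ^ 2 - d ^ 2) := intervalIntegral.integral_of_le hρ.le
    _ ≤ H d := setIntegral_mono_set hf (ae_of_all _ fun u => by positivity)
      Ioc_subset_Ioi_self.eventuallyLE

lemma tendsto_arcosh_atTop : Tendsto arcosh atTop atTop := by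
  refine tendsto_atTop_mono' _ ?_ tendsto_log_atTop
  filter_upwards [eventually_ge_atTop 1] with x hx
  exact log_le_log (by linarith) (by linarith [sqrt_nonneg (x ^ 2 - 1)])

lemma tendsto_two_mul_sub_div_sub_one_nhdsGT {c : ℝ} (hc : 1 < c) :
    Tendsto (fun d => (2 * c - d - 1) / (d - 1)) (𝓝[>] 1) atTop := by
  have hnum : Tendsto (fun d : ℝ => 2 * c - d - 1) (𝓝[>] 1) (𝓝 (2 * c - 1 - 1)) :=
    (Continuous.tendsto (by fun_prop) _).mono_left nhdsWithin_le_nhds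
  have hden : Tendsto (fun d : ℝ => d - 1) (𝓝[>] 1) (𝓝[>] 0) := by
    refine tendsto_nhdsWithin_iff.2
      ⟨?_, eventually_nhdsWithin_of_forall fun d hd => mem_Ioi.2 (sub_pos.2 hd)⟩
    simpa using ((continuous_sub_right (1 : ℝ)).tendsto 1).mono_left nhdsWithin_le_nhds
  simpa only [div_eq_mul_inv, Pi.inv_apply] using
    hnum.pos_mul_atTop (by linarith) hden.inv_tendsto_nhdsGT_zero

theorem tendsto_mul_arcosh_nhdsGT_one {ρ : ℝ} (hρ : 0 < ρ) :
    Tendsto (fun d => 1 / (√(cosh ρ / d + 1) * √((cosh ρ + 1) / d)) *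
      arcosh ((2 * cosh ρ - d - 1) / (d - 1))) (𝓝[>] 1) atTop := by
  have hK : ContinuousAt (fun d => 1 / (√(cosh ρ / d + 1) * √((cosh ρ + 1) / d))) 1 := by
    fun_prop (disch := positivity)
  exact (hK.tendsto.mono_left nhdsWithin_le_nhds).pos_mul_atTop (by positivity)
    (tendsto_arcosh_atTop.comp (tendsto_two_mul_sub_div_sub_one_nhdsGT (one_lt_cosh.2 hρ.ne')))

/-- For `d > 1` and any `ρ > arccosh d`,
`H(d) ≥ arccosh((2cosh ρ − d − 1)/(d − 1)) / (√(cosh ρ/d + 1)·√((cosh ρ + 1)/d))`;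
moreover for each fixed `ρ > 0` the right-hand side tends to `+∞` as `d → 1⁺`. -/
theorem stmt_19 :
    (∀ d : ℝ, 1 < d → ∀ ρ : ℝ, arccosh d < ρ →
      1 / (Real.sqrt (Real.cosh ρ / d + 1) * Real.sqrt ((Real.cosh ρ + 1) / d)) *
          arccosh ((2 * Real.cosh ρ - d - 1) / (d - 1)) ≤ H d) ∧
    (∀ ρ : ℝ, 0 < ρ →
      Tendsto (fun d : ℝ =>
          1 / (Real.sqrt (Real.cosh ρ / d + 1) * Real.sqrt ((Real.cosh ρ + 1) / d)) *
            arccosh ((2 * Real.cosh ρ - d - 1) / (d - 1)))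
        (𝓝[>] (1 : ℝ)) atTop) := by
  rw [arccosh_eq_arcosh]
  exact ⟨fun _ hd _ hρ => mul_arcosh_le_H hd hρ,
    fun _ hρ => tendsto_mul_arcosh_nhdsGT_one hρ⟩
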